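/- arXiv:2003.12815 — 3 statements merged into one kernel-verified Lean document; each statement's English description precedes it below -/
import Mathlib

section
/- Let W = e_c 1^T + E_s Γ̂^T = w_c 1^T + W_s Γ^T be a rank-(k+1) matrix in R^{m×D}, where E_s ∈ R^{m×k}, Γ̂ ∈ R^{D×k}, W_s ∈ R^{m×k}, Γ ∈ R^{D×k} are all rank-k matrices with k < m and k < D. If w_c is orthogonal to the column span of W_s, then w_c = e_c - P_{E_s} e_c, where P_{E_s} is the orthogonal projection onto the column span of E_s. -/
/-!
Write `W = e bᵀ + E_s Ĝᵀ = w bᵀ + W_s Γᵀ` with `b = 1`. The rank bound `rank W = k + 1` forces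
`b ∉ col(Ĝ)` and `b ∉ col(Γ)`: if `b = Ĝ c`, then `W = (e cᵀ + E_s) Ĝᵀ` has rank at most `k`.

Multiplying the identity on the left by `wᵀ` and using `W_sᵀ w = 0` gives
`Ĝ (E_sᵀ w) = (w ⬝ w - w ⬝ e) b`; as `b ∉ col(Ĝ)` the scalar vanishes, and `Ĝ` is injective, so
`E_sᵀ w = 0`. Multiplying on the right by a vector `x` with `Γᵀ x = 0` and `b ⬝ x ≠ 0`, which exists
because `b ∉ col(Γ)`, gives `(b ⬝ x) (e - w) = -E_s (Ĝᵀ x)`, so `e - w ∈ col(E_s)`.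
-/

open Matrix

namespace Matrix

variable {K : Type*} [Field K] {m n k : Type*} [Fintype k]

lemma mulVec_injective_of_rank_eq_card {M : Matrix n k K} (h : M.rank = Fintype.card k) :
    Function.Injective M.mulVec :=
  mulVec_injective_iff.2 <| linearIndependent_iff_card_eq_finrank_span.2 <| by
    rw [Set.finrank, ← rank_eq_finrank_span_cols, h]

lemma mulVec_mem_span_range_transpose (M : Matrix m k K) (c : k → K) :
    M *ᵥ c ∈ Submodule.span K (Set.range Mᵀ) := by
  rw [show Set.range Mᵀ = Set.range M.col from rfl, ← range_mulVecLin]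
  exact ⟨c, rfl⟩

lemma notMem_range_mulVecLin_of_card_lt_rank [Fintype n] (a : m → K) (B : Matrix m k K) {M : Matrix n k K}
    {b : n → K} (hrank : Fintype.card k < (vecMulVec a b + B * Mᵀ).rank) :
    b ∉ LinearMap.range M.mulVecLin := by
  rintro ⟨c, rfl⟩
  have hfactor : vecMulVec a (M.mulVecLin c) + B * Mᵀ = (vecMulVec a c + B) * Mᵀ := by
    rw [Matrix.add_mul, vecMulVec_mul, vecMul_transpose, mulVecLin_apply]
  rw [hfactor] at hrank
  exact ((rank_mul_le_right _ _).trans (rank_le_card_height _)).not_gt hrank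

lemma exists_mulVec_transpose_eq_zero_dotProduct_ne_zero [Fintype n] {M : Matrix n k K} {b : n → K}
    (hb : b ∉ LinearMap.range M.mulVecLin) : ∃ x, Mᵀ *ᵥ x = 0 ∧ b ⬝ᵥ x ≠ 0 := by
  classical
  obtain ⟨f, hfb, hf⟩ := Submodule.exists_dual_map_eq_bot_of_notMem hb inferInstance
  have hf_apply (v : n → K) : f v = v ⬝ᵥ fun i => f (Pi.single i 1) := by
    rw [f.pi_apply_eq_sum_univ v]
    refine Finset.sum_congr rfl fun i _ => ?_
    congr 2
    ext j
    simp only [Pi.single_apply, eq_comm]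
  refine ⟨fun i => f (Pi.single i 1), funext fun j => ?_, by rwa [← hf_apply]⟩
  have hcol : f (M *ᵥ Pi.single j 1) = 0 := by
    have := Submodule.mem_map_of_mem (f := f) (LinearMap.mem_range_self M.mulVecLin (Pi.single j 1))
    rwa [hf, Submodule.mem_bot] at this
  rwa [hf_apply, dotProduct_comm, dotProduct_mulVec, dotProduct_single_one,
    ← mulVec_transpose] at hcol

section TwoFactorizations

variable {e w : m → K} {b : n → K} {E W_s : Matrix m k K} {Ĝ G : Matrix n k K}

lemma transpose_mulVec_eq_zero_of_vecMulVec_add_mul_transpose_eq [Fintype m]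
    (hW : vecMulVec e b + E * Ĝᵀ = vecMulVec w b + W_s * Gᵀ) (horth : W_sᵀ *ᵥ w = 0)
    (hĜ : Function.Injective Ĝ.mulVec) (hb : b ∉ LinearMap.range Ĝ.mulVecLin) :
    Eᵀ *ᵥ w = 0 := by
  have hrow : (w ⬝ᵥ e) • b + Ĝ *ᵥ (Eᵀ *ᵥ w) = (w ⬝ᵥ w) • b := by
    have h := congrArg (w ᵥ* ·) hW
    simp only [vecMul_add, vecMul_vecMulVec, ← vecMul_vecMul, vecMul_transpose] at h
    rwa [← mulVec_transpose, ← mulVec_transpose, horth, mulVec_zero, add_zero] at h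
  set α := w ⬝ᵥ w - w ⬝ᵥ e
  have hα : Ĝ *ᵥ (Eᵀ *ᵥ w) = α • b := by
    rw [sub_smul, ← hrow, add_sub_cancel_left]
  have hα0 : α = 0 := by
    by_contra hne
    refine hb ⟨α⁻¹ • (Eᵀ *ᵥ w), ?_⟩
    rw [mulVecLin_apply, mulVec_smul, hα, smul_smul, inv_mul_cancel₀ hne, one_smul]
  exact hĜ (by rw [hα, hα0, zero_smul, mulVec_zero])

lemma sub_mem_span_of_vecMulVec_add_mul_transpose_eq [Fintype n]
    (hW : vecMulVec e b + E * Ĝᵀ = vecMulVec w b + W_s * Gᵀ)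
    (hb : b ∉ LinearMap.range G.mulVecLin) :
    e - w ∈ Submodule.span K (Set.range Eᵀ) := by
  obtain ⟨x, hGx, hbx⟩ := exists_mulVec_transpose_eq_zero_dotProduct_ne_zero hb
  have hcol : (b ⬝ᵥ x) • e + E *ᵥ (Ĝᵀ *ᵥ x) = (b ⬝ᵥ x) • w := by
    simpa only [add_mulVec, vecMulVec_mulVec, op_smul_eq_smul, ← mulVec_mulVec, hGx, mulVec_zero,
      add_zero] using congrArg (· *ᵥ x) hW
  have hsmul : (b ⬝ᵥ x) • (e - w) = E *ᵥ -(Ĝᵀ *ᵥ x) := by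
    rw [smul_sub, ← hcol, mulVec_neg]
    abel
  rw [← Submodule.smul_mem_iff _ hbx, hsmul]
  exact mulVec_mem_span_range_transpose E _

end TwoFactorizations

end Matrix

theorem stmt0_general {m D k : ℕ}
    (e_c w_c : Fin m → ℝ)
    (E_s W_s : Matrix (Fin m) (Fin k) ℝ)
    (Γhat Γ : Matrix (Fin D) (Fin k) ℝ)
    (W : Matrix (Fin m) (Fin D) ℝ)
    (hW1 : W = vecMulVec e_c (fun _ => (1 : ℝ)) + E_s * Γhatᵀ)
    (hW2 : W = vecMulVec w_c (fun _ => (1 : ℝ)) + W_s * Γᵀ)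
    (hrW : W.rank = k + 1)
    (hrΓhat : Γhat.rank = k)
    (horth : W_sᵀ *ᵥ w_c = 0) :
    E_sᵀ *ᵥ w_c = 0 ∧ e_c - w_c ∈ Submodule.span ℝ (Set.range E_sᵀ) := by
  have hrank : Fintype.card (Fin k) < W.rank := by simp [hrW]
  have hΓhat := notMem_range_mulVecLin_of_card_lt_rank e_c E_s (hW1 ▸ hrank)
  have hΓ := notMem_range_mulVecLin_of_card_lt_rank w_c W_s (hW2 ▸ hrank)
  have hW := hW1.symm.trans hW2
  exact ⟨transpose_mulVec_eq_zero_of_vecMulVec_add_mul_transpose_eq hW horth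
      (mulVec_injective_of_rank_eq_card (by simpa using hrΓhat)) hΓhat,
    sub_mem_span_of_vecMulVec_add_mul_transpose_eq hW hΓ⟩

/-- If `W = e_c 1ᵀ + E_s Γ̂ᵀ = w_c 1ᵀ + W_s Γᵀ` is rank `k+1` with all
factors of rank `k`, `k < m`, `k < D`, and `w_c ⊥ Span(W_s)` (i.e. `W_sᵀ w_c = 0`),
then `w_c = e_c - P_{E_s} e_c`, i.e. `w_c ⊥ Span(E_s)` and `e_c - w_c ∈ Span(E_s)`. -/
theorem stmt0 {m D k : ℕ} (hkm : k < m) (hkD : k < D)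
    (e_c w_c : Fin m → ℝ)
    (E_s W_s : Matrix (Fin m) (Fin k) ℝ)
    (Γhat Γ : Matrix (Fin D) (Fin k) ℝ)
    (W : Matrix (Fin m) (Fin D) ℝ)
    (hW1 : W = vecMulVec e_c (fun _ => (1 : ℝ)) + E_s * Γhatᵀ)
    (hW2 : W = vecMulVec w_c (fun _ => (1 : ℝ)) + W_s * Γᵀ)
    (hrW : W.rank = k + 1)
    (hrE : E_s.rank = k) (hrΓhat : Γhat.rank = k)
    (hrWs : W_s.rank = k) (hrΓ : Γ.rank = k)
    (horth : W_sᵀ *ᵥ w_c = 0) :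
    E_sᵀ *ᵥ w_c = 0 ∧ e_c - w_c ∈ Submodule.span ℝ (Set.range E_sᵀ) :=
  stmt0_general e_c w_c E_s W_s Γhat Γ W hW1 hW2 hrW hrΓhat horth
end

section
/- Let W ∈ R^{m×D}, w̃ = (1/D) W 1, and let σ̃_1 ≥ σ̃_2 ≥ ... denote the singular values of W - w̃ 1^T. Then for every matrix W̃ ∈ R^{m×D} with rank(W̃) ≤ k+1 and 1 ∈ Span(W̃^T), the operator norm satisfies ||W - W̃||_2 ≥ σ̃_{k+1}. -/
/-!
Write `A = W - w̃ 1ᵀ = ∑ σᵢ uᵢ vᵢᵀ`. Since `A 1 = 0`, every right singular vector `vᵢ` with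
`σᵢ > 0` is orthogonal to `1`. If `σₖ₊₁ = 0` there is nothing to prove; otherwise
`V = span (v₁, …, vₖ₊₁)` and `ker W̃` both lie in the hyperplane `1^⊥` (the latter because `1` is a
row-space vector of `W̃`), and their dimensions add up to at least `D`, so they share a unit
vector `x`. Then `(W - W̃) x = A x`, and `‖A x‖² = ∑ σᵢ² (vᵢ ⬝ x)² ≥ σₖ₊₁²`.
-/

open Matrix Module

/-- Orthonormality for `⬝ᵥ`: the sup-normed space `n → ℝ` has no inner-product instance, so
Mathlib's `Orthonormal` does not apply. -/
def DotOrthonormal {n ι : Type*} [Fintype n] [DecidableEq ι] (w : ι → n → ℝ) : Prop :=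
  ∀ i j, w i ⬝ᵥ w j = if i = j then 1 else 0

namespace DotOrthonormal

variable {n ι : Type*} [Fintype n] [DecidableEq ι] {w : ι → n → ℝ}

lemma subtype (hw : DotOrthonormal w) (p : ι → Prop) :
    DotOrthonormal fun i : Subtype p => w i :=
  fun i j => (hw i j).trans (if_congr Subtype.ext_iff.symm rfl rfl)

variable [Fintype ι]

lemma dotProduct_sum_smul (hw : DotOrthonormal w) (c : ι → ℝ) (j : ι) :
    w j ⬝ᵥ ∑ i, c i • w i = c j := by
  simp [dotProduct_sum, dotProduct_smul, hw j]

lemma sum_smul_dotProduct_sum_smul (hw : DotOrthonormal w) (a b : ι → ℝ) :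
    (∑ i, a i • w i) ⬝ᵥ ∑ i, b i • w i = ∑ i, a i * b i := by
  simp [sum_dotProduct, smul_dotProduct, hw.dotProduct_sum_smul]

lemma linearIndependent (hw : DotOrthonormal w) : LinearIndependent ℝ w := by
  refine Fintype.linearIndependent_iff.mpr fun c hc j => ?_
  simpa [hc] using (hw.dotProduct_sum_smul c j).symm

lemma dotProduct_self_eq_sum_sq_of_mem_span (hw : DotOrthonormal w) {x : n → ℝ}
    (hx : x ∈ Submodule.span ℝ (Set.range w)) : x ⬝ᵥ x = ∑ j, (w j ⬝ᵥ x) ^ 2 := by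
  obtain ⟨c, rfl⟩ := Submodule.mem_span_range_iff_exists_fun ℝ |>.mp hx
  simp [hw.sum_smul_dotProduct_sum_smul, hw.dotProduct_sum_smul, sq]

end DotOrthonormal

section SVD

variable {m n ι : Type*} [Fintype n] [Fintype ι]

lemma sum_smul_vecMulVec_mulVec (σ : ι → ℝ) (u : ι → m → ℝ) (v : ι → n → ℝ) (x : n → ℝ) :
    (∑ i, σ i • vecMulVec (u i) (v i)) *ᵥ x = ∑ i, (σ i * v i ⬝ᵥ x) • u i := by
  rw [sum_mulVec]
  refine Finset.sum_congr rfl fun i _ => ?_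
  rw [smul_mulVec, vecMulVec_mulVec, op_smul_eq_smul, smul_smul]

variable [Fintype m] [DecidableEq ι] {σ : ι → ℝ} {u : ι → m → ℝ} {v : ι → n → ℝ}

lemma mul_dotProduct_eq_zero_of_sum_smul_vecMulVec_mulVec_eq_zero (hu : DotOrthonormal u)
    {y : n → ℝ} (hy : (∑ i, σ i • vecMulVec (u i) (v i)) *ᵥ y = 0) (i : ι) :
    σ i * v i ⬝ᵥ y = 0 := by
  rw [← hu.dotProduct_sum_smul (fun j => σ j * v j ⬝ᵥ y) i, ← sum_smul_vecMulVec_mulVec, hy,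
    dotProduct_zero]

lemma sq_le_dotProduct_self_sum_smul_vecMulVec_mulVec (hu : DotOrthonormal u)
    (hv : DotOrthonormal v) {s : Finset ι} {c : ℝ} (hc : 0 ≤ c) (hσ : ∀ i ∈ s, c ≤ σ i)
    {x : n → ℝ} (hx : x ∈ Submodule.span ℝ (Set.range fun i : s => v i)) (hxx : x ⬝ᵥ x = 1) :
    c ^ 2 ≤
      (∑ i, σ i • vecMulVec (u i) (v i)) *ᵥ x ⬝ᵥ (∑ i, σ i • vecMulVec (u i) (v i)) *ᵥ x := by
  calc c ^ 2 = c ^ 2 * x ⬝ᵥ x := by rw [hxx, mul_one]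
    _ = ∑ i ∈ s, c ^ 2 * (v i ⬝ᵥ x) ^ 2 := by
        rw [(hv.subtype (· ∈ s)).dotProduct_self_eq_sum_sq_of_mem_span hx,
          Finset.sum_coe_sort s fun i => (v i ⬝ᵥ x) ^ 2, Finset.mul_sum]
    _ ≤ ∑ i ∈ s, (σ i * v i ⬝ᵥ x) ^ 2 := Finset.sum_le_sum fun i hi => by
        rw [mul_pow]
        gcongr
        exact hσ i hi
    _ ≤ ∑ i, (σ i * v i ⬝ᵥ x) ^ 2 :=
        Finset.sum_le_sum_of_subset_of_nonneg s.subset_univ fun i _ _ => sq_nonneg _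
    _ = _ := by
        rw [sum_smul_vecMulVec_mulVec, hu.sum_smul_dotProduct_sum_smul]
        simp only [sq]

end SVD

lemma Submodule.inf_ne_bot_of_le_ker {K E : Type*} [Field K] [AddCommGroup E] [Module K E]
    [FiniteDimensional K E] {U V : Submodule K E} {f : E →ₗ[K] K} (hf : f ≠ 0)
    (hU : U ≤ LinearMap.ker f) (hV : V ≤ LinearMap.ker f)
    (hdim : finrank K E ≤ finrank K U + finrank K V) : U ⊓ V ≠ ⊥ := by
  have hsup : finrank K ↥(U ⊔ V) < finrank K E := by
    refine Submodule.finrank_lt fun htop => hf ?_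
    exact LinearMap.ker_eq_top.mp (top_le_iff.mp (htop ▸ sup_le hU hV))
  intro hbot
  have hsum := Submodule.finrank_sup_add_finrank_inf_eq U V
  rw [hbot, finrank_bot] at hsum
  omega

lemma exists_dotProduct_self_eq_one_mem {n : Type*} [Fintype n] {P : Submodule ℝ (n → ℝ)}
    (hP : P ≠ ⊥) : ∃ x ∈ P, x ⬝ᵥ x = 1 := by
  obtain ⟨z, hzP, hz⟩ := P.exists_mem_ne_zero_of_ne_bot hP
  have hpos : 0 < z ⬝ᵥ z := by simpa using dotProduct_star_self_pos_iff.mpr hz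
  refine ⟨(√(z ⬝ᵥ z))⁻¹ • z, P.smul_mem _ hzP, ?_⟩
  rw [smul_dotProduct, dotProduct_smul, smul_smul, smul_eq_mul, ← mul_inv,
    Real.mul_self_sqrt hpos.le, inv_mul_cancel₀ hpos.ne']

section RowSpace

variable {m n : Type*} [Fintype m] [Fintype n]

lemma dotProduct_eq_zero_of_mem_span_rows {M : Matrix m n ℝ} {r z : n → ℝ}
    (hr : r ∈ Submodule.span ℝ (Set.range M)) (hz : M *ᵥ z = 0) : r ⬝ᵥ z = 0 := by
  obtain ⟨c, rfl⟩ := Submodule.mem_span_range_iff_exists_fun ℝ |>.mp hr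
  have hrows : ∀ i, M i ⬝ᵥ z = 0 := fun i => congrFun hz i
  simp [sum_dotProduct, smul_dotProduct, hrows]

-- `ker M` and `span w` both lie in the hyperplane `r^⊥` and have total dimension at least
-- `card n`, so they meet nontrivially.
lemma exists_mulVec_eq_zero_of_rank_le_card {ι : Type*} [Fintype ι] [DecidableEq ι]
    {M : Matrix m n ℝ} {r : n → ℝ} (hr : r ∈ Submodule.span ℝ (Set.range M)) (hr0 : r ≠ 0)
    {w : ι → n → ℝ} (hw : DotOrthonormal w) (hrw : ∀ i, r ⬝ᵥ w i = 0)
    (hrank : M.rank ≤ Fintype.card ι) :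
    ∃ x ∈ Submodule.span ℝ (Set.range w), M *ᵥ x = 0 ∧ x ⬝ᵥ x = 1 := by
  set f : (n → ℝ) →ₗ[ℝ] ℝ := dotProductBilin ℝ ℝ r
  have hf : f ≠ 0 := fun h => by
    simpa [f, hr0] using LinearMap.congr_fun h r
  have hK : LinearMap.ker M.mulVecLin ≤ LinearMap.ker f := fun z hz =>
    dotProduct_eq_zero_of_mem_span_rows hr hz
  have hV : Submodule.span ℝ (Set.range w) ≤ LinearMap.ker f :=
    Submodule.span_le.mpr (Set.range_subset_iff.mpr hrw)
  have hdim : finrank ℝ (n → ℝ) ≤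
      finrank ℝ (LinearMap.ker M.mulVecLin) + finrank ℝ (Submodule.span ℝ (Set.range w)) := by
    have hnullity := LinearMap.finrank_range_add_finrank_ker M.mulVecLin
    rw [← Matrix.rank] at hnullity
    rw [finrank_span_eq_card hw.linearIndependent]
    omega
  obtain ⟨x, ⟨hxK, hxV⟩, hxx⟩ :=
    exists_dotProduct_self_eq_one_mem (Submodule.inf_ne_bot_of_le_ker hf hK hV hdim)
  exact ⟨x, hxV, hxK, hxx⟩

end RowSpace

lemma sub_vecMulVec_mean_mulVec_one {m D : ℕ} (W : Matrix (Fin m) (Fin D) ℝ) :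
    (W - vecMulVec ((D : ℝ)⁻¹ • (W *ᵥ fun _ => (1 : ℝ))) (fun _ => (1 : ℝ))) *ᵥ
      (fun _ => 1) = 0 := by
  rcases Nat.eq_zero_or_pos D with rfl | hD
  · ext
    simp [mulVec, dotProduct]
  · have hone : (fun _ => (1 : ℝ)) ⬝ᵥ (fun _ : Fin D => (1 : ℝ)) = D := by simp [dotProduct]
    rw [sub_mulVec, vecMulVec_mulVec, op_smul_eq_smul, hone, smul_smul]
    simp [hD.ne']

theorem stmt5_general {m D k : ℕ} (hk : k < min m D)
    (W : Matrix (Fin m) (Fin D) ℝ)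
    (σ : Fin (min m D) → ℝ)
    (u : Fin (min m D) → (Fin m → ℝ)) (v : Fin (min m D) → (Fin D → ℝ))
    (hu : ∀ i j, dotProduct (u i) (u j) = if i = j then 1 else 0)
    (hv : ∀ i j, dotProduct (v i) (v j) = if i = j then 1 else 0)
    (hσsort : ∀ i j, i ≤ j → σ j ≤ σ i)
    (hSVD : W - vecMulVec ((D : ℝ)⁻¹ • (W *ᵥ fun _ => (1 : ℝ))) (fun _ => (1 : ℝ))
            = ∑ i, σ i • vecMulVec (u i) (v i)) :
    ∀ Wt : Matrix (Fin m) (Fin D) ℝ, Wt.rank ≤ k + 1 →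
      (fun _ => (1 : ℝ)) ∈ Submodule.span ℝ (Set.range Wt) →
      ∃ x : Fin D → ℝ, dotProduct x x = 1 ∧
        σ ⟨k, hk⟩ ≤ Real.sqrt (dotProduct ((W - Wt) *ᵥ x) ((W - Wt) *ᵥ x)) := by
  replace hu : DotOrthonormal u := hu
  replace hv : DotOrthonormal v := hv
  intro Wt hrank hone
  have hD : 0 < D := (Nat.zero_le k).trans_lt (hk.trans_le (min_le_right m D))
  rcases le_or_gt (σ ⟨k, hk⟩) 0 with hσk | hσk
  · exact ⟨Pi.single ⟨0, hD⟩ 1, by simp, hσk.trans (Real.sqrt_nonneg _)⟩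
  set s := Finset.Iic (⟨k, hk⟩ : Fin (min m D))
  have hσs : ∀ i ∈ s, σ ⟨k, hk⟩ ≤ σ i := fun i hi => hσsort _ _ (Finset.mem_Iic.mp hi)
  have hv_one : ∀ i : s, (fun _ => 1) ⬝ᵥ v i = 0 := fun i => by
    have hAone := mul_dotProduct_eq_zero_of_sum_smul_vecMulVec_mulVec_eq_zero hu
      (hSVD ▸ sub_vecMulVec_mean_mulVec_one W) i
    rw [dotProduct_comm]
    exact (mul_eq_zero.mp hAone).resolve_left (hσk.trans_le (hσs i i.2)).ne'
  have hone0 : (fun _ : Fin D => (1 : ℝ)) ≠ 0 := fun h => by simpa using congrFun h ⟨0, hD⟩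
  obtain ⟨x, hxV, hWtx, hxx⟩ := exists_mulVec_eq_zero_of_rank_le_card hone hone0
    (hv.subtype (· ∈ s)) hv_one (by rwa [Fintype.card_coe, Fin.card_Iic])
  have hWx : (W - Wt) *ᵥ x = (∑ i, σ i • vecMulVec (u i) (v i)) *ᵥ x := by
    rw [← hSVD, sub_mulVec, sub_mulVec, vecMulVec_mulVec, hWtx,
      dotProduct_eq_zero_of_mem_span_rows hone hWtx]
    simp
  refine ⟨x, hxx, Real.le_sqrt_of_sq_le ?_⟩
  rw [hWx]
  exact sq_le_dotProduct_self_sum_smul_vecMulVec_mulVec hu hv hσk.le hσs hxV hxx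

/-- Let `w̃ = (1/D) W 1` and let `σ₁ ≥ σ₂ ≥ ... ≥ 0` be the singular
values of `A = W - w̃ 1ᵀ`, given through a full SVD `A = Σᵢ σᵢ uᵢ vᵢᵀ` with
orthonormal `u`, `v` (indexed by `Fin (min m D)`). Then for every `W̃` of rank at
most `k+1` whose row space contains the all-ones vector, the operator norm of
`W - W̃` is at least `σ_{k+1}` (index `k` in 0-based counting): there is a unit
vector `x` with `‖(W - W̃) x‖ ≥ σ_{k+1}`. -/
theorem stmt5 {m D k : ℕ} (hD : 0 < D) (hk : k < min m D)
    (W : Matrix (Fin m) (Fin D) ℝ)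
    (σ : Fin (min m D) → ℝ)
    (u : Fin (min m D) → (Fin m → ℝ)) (v : Fin (min m D) → (Fin D → ℝ))
    (hu : ∀ i j, dotProduct (u i) (u j) = if i = j then 1 else 0)
    (hv : ∀ i j, dotProduct (v i) (v j) = if i = j then 1 else 0)
    (hσsort : ∀ i j, i ≤ j → σ j ≤ σ i) (hσnn : ∀ i, 0 ≤ σ i)
    (hSVD : W - vecMulVec ((D : ℝ)⁻¹ • (W *ᵥ fun _ => (1 : ℝ))) (fun _ => (1 : ℝ))
            = ∑ i, σ i • vecMulVec (u i) (v i)) :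
    ∀ Wt : Matrix (Fin m) (Fin D) ℝ, Wt.rank ≤ k + 1 →
      (fun _ => (1 : ℝ)) ∈ Submodule.span ℝ (Set.range Wt) →
      ∃ x : Fin D → ℝ, dotProduct x x = 1 ∧
        σ ⟨k, hk⟩ ≤ Real.sqrt (dotProduct ((W - Wt) *ᵥ x) ((W - Wt) *ᵥ x)) :=
  stmt5_general hk W σ u v hu hv hσsort hSVD
end

section
/- Let W ∈ R^{m×D} be a matrix such that 1 ∈ Span(W^T) and W^+ 1 ≠ 0. Then w_c := (W^+ 1)/||W^+ 1||^2 satisfies w_c^T W = ||w_c||^2 · 1^T, and W - w_c 1^T has rank at most rank(W) - 1. -/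
open Matrix

/-- The four Penrose conditions characterizing the Moore–Penrose pseudoinverse. -/
def IsMoorePenrose {m D : ℕ} (W : Matrix (Fin m) (Fin D) ℝ)
    (P : Matrix (Fin D) (Fin m) ℝ) : Prop :=
  W * P * W = W ∧ P * W * P = P ∧ (W * P)ᵀ = W * P ∧ (P * W)ᵀ = P * W

/-!
Write `1ᵀ = cᵀ W`. Then `qᵀ W = 1ᵀ P W = cᵀ W P W = cᵀ W = 1ᵀ`, which scales to the identity
for `w_c`. Since `W P` is symmetric, `q = Pᵀ 1` is fixed by `W P`, so `w_c = W z` with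
`z = P w_c` and `1 ⬝ z = q ⬝ w_c = 1`. The rows of `W - w_c 1ᵀ` stay in the row space of `W`
(which contains `1`) and are all orthogonal to `z`; as `1` is not, the row space shrinks.
-/

namespace Matrix

variable {m n R : Type*} [Fintype m]

theorem mem_span_range_iff_exists_vecMul [CommSemiring R] {W : Matrix m n R} {v : n → R} :
    v ∈ Submodule.span R (Set.range W) ↔ ∃ c, c ᵥ* W = v := by
  change v ∈ Submodule.span R (Set.range W.row) ↔ _
  rw [← range_vecMulLinear]
  rfl

theorem vecMul_vecMul_eq_of_mul_mul_eq [Fintype n] [CommSemiring R]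
    {W : Matrix m n R} {P : Matrix n m R}
    (hWPW : W * P * W = W) {v : n → R} (hv : v ∈ Submodule.span R (Set.range W)) :
    (v ᵥ* P) ᵥ* W = v := by
  obtain ⟨c, rfl⟩ := mem_span_range_iff_exists_vecMul.mp hv
  rw [vecMul_vecMul, vecMul_vecMul, ← Matrix.mul_assoc, hWPW]

theorem rank_sub_vecMulVec_lt [Fintype n] [Field R]
    {W : Matrix m n R} {v z : n → R} {w : m → R}
    (hv : v ∈ Submodule.span R (Set.range W)) (hz : W *ᵥ z = w) (hvz : v ⬝ᵥ z = 1) :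
    (W - vecMulVec w v).rank < W.rank := by
  have hMz : (W - vecMulVec w v) *ᵥ z = 0 := by
    rw [sub_mulVec, hz, vecMulVec_mulVec, hvz]
    simp
  have hle : Submodule.span R (Set.range (W - vecMulVec w v)) ≤
      Submodule.span R (Set.range W) := by
    refine Submodule.span_le.mpr (Set.range_subset_iff.mpr fun i => ?_)
    have hrow : (W - vecMulVec w v) i = W i - w i • v := by ext; simp [vecMulVec_apply]
    rw [SetLike.mem_coe, hrow]
    exact Submodule.sub_mem _ (Submodule.subset_span ⟨i, rfl⟩) (Submodule.smul_mem _ _ hv)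
  have hv_notMem : v ∉ Submodule.span R (Set.range (W - vecMulVec w v)) := by
    rintro hvM
    obtain ⟨c, hc⟩ := mem_span_range_iff_exists_vecMul.mp hvM
    have := congrArg (· ⬝ᵥ z) hc
    simp only [← dotProduct_mulVec, hMz, dotProduct_zero, hvz] at this
    exact zero_ne_one this
  rw [rank_eq_finrank_span_row, rank_eq_finrank_span_row]
  exact Submodule.finrank_lt_finrank_of_lt
    (SetLike.lt_iff_le_and_exists.mpr ⟨hle, v, hv, hv_notMem⟩)

end Matrix

/-- Let `W ∈ ℝ^{m×D}` with `1` in its row space and `W⁺1 ≠ 0`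
(interpreting `W⁺1` as `(W⁺)ᵀ 1 = 1ᵀ W⁺ ∈ ℝ^m`). Then
`w_c := W⁺1 / ‖W⁺1‖²` satisfies `w_cᵀ W = ‖w_c‖² 1ᵀ`, and `W - w_c 1ᵀ` has rank
at most `rank(W) - 1`. -/
theorem stmt9 {m D : ℕ} (W : Matrix (Fin m) (Fin D) ℝ)
    (hones : (fun _ => (1 : ℝ)) ∈ Submodule.span ℝ (Set.range W))
    (P : Matrix (Fin D) (Fin m) ℝ) (hP : IsMoorePenrose W P)
    (q w_c : Fin m → ℝ)
    (hq : q = (fun _ => (1 : ℝ)) ᵥ* P) (hq0 : q ≠ 0)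
    (hwc : w_c = (dotProduct q q)⁻¹ • q) :
    w_c ᵥ* W = dotProduct w_c w_c • (fun _ => (1 : ℝ)) ∧
    (W - vecMulVec w_c (fun _ => (1 : ℝ))).rank ≤ W.rank - 1 := by
  obtain ⟨hWPW, -, hWPsymm, -⟩ := hP
  have hqW : q ᵥ* W = fun _ => 1 := hq ▸ vecMul_vecMul_eq_of_mul_mul_eq hWPW hones
  have hqq : q ⬝ᵥ q ≠ 0 := fun h => hq0 (dotProduct_self_eq_zero.mp h)
  have hwcwc : w_c ⬝ᵥ w_c = (q ⬝ᵥ q)⁻¹ := by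
    rw [hwc, dotProduct_smul, smul_dotProduct, smul_eq_mul, smul_eq_mul, ← mul_assoc,
      inv_mul_cancel_right₀ hqq]
  refine ⟨by rw [hwcwc, hwc, smul_vecMul, hqW], ?_⟩
  have hWPq : (W * P) *ᵥ q = q := by
    rw [← hWPsymm, mulVec_transpose, ← vecMul_vecMul, hqW, hq]
  have hWz : W *ᵥ (P *ᵥ w_c) = w_c := by
    rw [mulVec_mulVec, hwc, mulVec_smul, hWPq]
  have hz : (fun _ => (1 : ℝ)) ⬝ᵥ (P *ᵥ w_c) = 1 := by
    rw [dotProduct_mulVec, ← hq, hwc, dotProduct_smul, smul_eq_mul, inv_mul_cancel₀ hqq]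
  have := rank_sub_vecMulVec_lt hones hWz hz
  omega
end
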